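/- Let s, t ∈ [-1, 1] and let p(x) = (x - 1)(x - s)(x - t)(x + 1). Then p has a hyperbolic antiderivative (i.e. there exists a real polynomial P with P' = p all of whose complex roots are real) if and only if s·t ≥ -1/5. -/

import Mathlib

/-!
Every antiderivative `P` of `p = (x² - 1)(x - s)(x - t)` has degree 5, leading coefficient `1/5`
and `P(1) - P(-1) = -4/15 - 4st/3`, so `st ≥ -1/5` says exactly that `P(1) ≤ P(-1)`.

If `P` is hyperbolic, Laguerre's inequality `P'² - P P'' > 0` away from the roots of `P`, taken
at the critical points `±1` where `P'' = p'` has a known sign, forces `P(1) ≤ 0 ≤ P(-1)`.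

Conversely, if `P(1) ≤ P(-1)`, shift `P` so that the smaller of its two local maxima
(at `-1` and at `max s t`) is `0`. Both local minima are then `≤ 0`, and the intermediate value
theorem together with the multiplicities at multiple critical points gives four real roots; the
fifth is real because non-real roots come in conjugate pairs.
-/

open Polynomial

/-- A real polynomial is hyperbolic if all of its complex roots are real. -/
def Hyperbolic (p : Polynomial ℝ) : Prop :=
  ∀ z ∈ (p.map (algebraMap ℝ ℂ)).roots, z.im = 0

open Set Filter

section RealRoots

variable {P : ℝ[X]}

theorem card_roots_eq_natDegree_of_hyperbolic (hP : Hyperbolic P) :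
    Multiset.card P.roots = P.natDegree := by
  rcases eq_or_ne P 0 with rfl | hP0
  · simp
  obtain ⟨q, hPq, hdeg, hq⟩ := P.exists_prod_multiset_X_sub_C_mul
  have hq0 : q ≠ 0 := by rintro rfl; simp [hP0.symm] at hPq
  suffices q.natDegree = 0 by omega
  by_contra hqdeg
  obtain ⟨z, hz⟩ := IsAlgClosed.exists_root (q.map (algebraMap ℝ ℂ))
    (by rwa [degree_map, degree_eq_natDegree hq0, Nat.cast_ne_zero])
  have hzP : z ∈ (P.map (algebraMap ℝ ℂ)).roots := by
    rw [mem_roots (Polynomial.map_ne_zero hP0), ← hPq, Polynomial.map_mul, IsRoot.def, eval_mul,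
      hz, mul_zero]
  have hz_re : (z.re : ℂ) = z := Complex.ext rfl (by simp [hP z hzP])
  have : q.IsRoot z.re := by
    rw [IsRoot, ← Complex.ofReal_inj, ← Complex.coe_algebraMap, ← eval₂_at_apply,
      ← eval_map, Complex.coe_algebraMap, hz_re]
    simpa using hz
  simpa [hq] using (mem_roots hq0).2 this

theorem hyperbolic_of_card_roots_eq_natDegree (h : Multiset.card P.roots = P.natDegree) :
    Hyperbolic P := by
  intro z hz
  rw [← roots_map_of_injective_of_card_eq_natDegree (algebraMap ℝ ℂ).injective h] at hz
  obtain ⟨r, -, rfl⟩ := Multiset.mem_map.1 hz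
  simp

theorem card_roots_eq_natDegree_of_natDegree_le_card_roots_add_one
    (h : P.natDegree ≤ Multiset.card P.roots + 1) : Multiset.card P.roots = P.natDegree := by
  obtain ⟨q, -, hdeg, hq⟩ := P.exists_prod_multiset_X_sub_C_mul
  suffices q.natDegree ≠ 1 by omega
  intro hq1
  obtain ⟨x, hx⟩ := exists_root_of_degree_eq_one
    ((degree_eq_iff_natDegree_eq_of_pos one_pos).2 hq1)
  have hq0 : q ≠ 0 := by rintro rfl; simp at hq1
  simpa [hq] using (mem_roots hq0).2 hx

end RealRoots

section Laguerre

noncomputable def laguerre {R : Type*} [CommRing R] (Q : R[X]) : R[X] :=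
  derivative Q ^ 2 - Q * derivative (derivative Q)

theorem laguerre_X_sub_C_mul {R : Type*} [CommRing R] (r : R) (Q : R[X]) :
    laguerre ((X - C r) * Q) = Q ^ 2 + (X - C r) ^ 2 * laguerre Q := by
  simp only [laguerre, derivative_mul, derivative_add, derivative_sub, derivative_X,
    derivative_C, sub_zero, one_mul]
  ring

theorem eval_laguerre_C_mul_prod_nonneg (a : ℝ) (μ : Multiset ℝ) (x : ℝ) :
    0 ≤ (laguerre (C a * (μ.map fun r => X - C r).prod)).eval x := by
  induction μ using Multiset.induction with
  | empty => simp [laguerre]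
  | cons r μ ih =>
    rw [Multiset.map_cons, Multiset.prod_cons, mul_left_comm, laguerre_X_sub_C_mul]
    simp only [eval_add, eval_mul, eval_pow]
    positivity

variable {P : ℝ[X]}

theorem eval_laguerre_pos (hroots : Multiset.card P.roots = P.natDegree)
    (hdeg : 0 < P.natDegree) {x : ℝ} (hx : P.eval x ≠ 0) : 0 < (laguerre P).eval x := by
  obtain ⟨r, hr⟩ := Multiset.card_pos_iff_exists_mem.1 (hroots ▸ hdeg)
  set Q := C P.leadingCoeff * ((P.roots.erase r).map fun r => X - C r).prod
  have hPQ : P = (X - C r) * Q := by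
    conv_lhs => rw [← C_leadingCoeff_mul_prod_multiset_X_sub_C hroots,
      ← Multiset.cons_erase hr, Multiset.map_cons, Multiset.prod_cons, mul_left_comm]
  have hQx : Q.eval x ≠ 0 := fun h => hx (by rw [hPQ, eval_mul, h, mul_zero])
  rw [hPQ, laguerre_X_sub_C_mul]
  simp only [eval_add, eval_mul, eval_pow]
  have := eval_laguerre_C_mul_prod_nonneg P.leadingCoeff (P.roots.erase r) x
  positivity

theorem eval_mul_eval_derivative_derivative_neg (hroots : Multiset.card P.roots = P.natDegree)
    (hdeg : 0 < P.natDegree) {x : ℝ} (hcrit : (derivative P).eval x = 0) (hx : P.eval x ≠ 0) :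
    P.eval x * (derivative (derivative P)).eval x < 0 := by
  have := eval_laguerre_pos hroots hdeg hx
  simp only [laguerre, eval_sub, eval_mul, eval_pow, hcrit] at this
  linarith

end Laguerre

section Calculus

variable {P : ℝ[X]} {a b : ℝ}

theorem eval_le_eval_of_derivative_nonneg (hab : a ≤ b)
    (h : ∀ x ∈ Icc a b, 0 ≤ (derivative P).eval x) : P.eval a ≤ P.eval b :=
  monotoneOn_of_deriv_nonneg (convex_Icc a b) P.continuousOn P.differentiableOn
    (fun x hx => by rw [Polynomial.deriv]; exact h x (interior_subset hx))
    (left_mem_Icc.2 hab) (right_mem_Icc.2 hab) hab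

theorem eval_le_eval_of_derivative_nonpos (hab : a ≤ b)
    (h : ∀ x ∈ Icc a b, (derivative P).eval x ≤ 0) : P.eval b ≤ P.eval a := by
  simpa using eval_le_eval_of_derivative_nonneg (P := -P) hab fun x hx => by simpa using h x hx

theorem exists_isRoot_mem_Icc (hab : a ≤ b) (h : (0 : ℝ) ∈ uIcc (P.eval a) (P.eval b)) :
    ∃ r ∈ Icc a b, P.IsRoot r := by
  obtain ⟨r, hr, hr0⟩ := intermediate_value_uIcc P.continuous.continuousOn h
  exact ⟨r, uIcc_of_le hab ▸ hr, hr0⟩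

theorem exists_isRoot_ge (hdeg : 0 < P.degree) (hlc : 0 ≤ P.leadingCoeff) (ha : P.eval a ≤ 0) :
    ∃ r, a ≤ r ∧ P.IsRoot r := by
  obtain ⟨b, hb, hab⟩ := ((P.tendsto_atTop_of_leadingCoeff_nonneg hdeg hlc).eventually_ge_atTop 0
    |>.and (eventually_ge_atTop a)).exists
  obtain ⟨r, hr, hr0⟩ := exists_isRoot_mem_Icc hab (mem_uIcc.2 (.inl ⟨ha, hb⟩))
  exact ⟨r, hr.1, hr0⟩

end Calculus

section Multiplicity

variable {R : Type*} [CommRing R] [IsDomain R] {P : R[X]} {a b c : R}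

theorem succ_le_rootMultiplicity_of_dvd_derivative [CharZero R] {k : ℕ}
    (hP' : derivative P ≠ 0) (ha : P.IsRoot a) (hk : (X - C a) ^ k ∣ derivative P) :
    k + 1 ≤ P.rootMultiplicity a := by
  have hP : P ≠ 0 := by rintro rfl; simp at hP'
  have := (le_rootMultiplicity_iff hP').2 hk
  rw [derivative_rootMultiplicity_of_root ha] at this
  have := (rootMultiplicity_pos hP).2 ha
  omega

variable [DecidableEq R]

theorem sum_rootMultiplicity_le_card_roots (P : R[X]) (S : Finset R) :
    ∑ a ∈ S, P.rootMultiplicity a ≤ Multiset.card P.roots := by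
  calc ∑ a ∈ S, P.rootMultiplicity a
      ≤ ∑ a ∈ S ∪ P.roots.toFinset, P.roots.count a := by
        simp only [count_roots]
        exact Finset.sum_le_sum_of_subset Finset.subset_union_left
    _ = Multiset.card P.roots :=
        Multiset.sum_count_eq_card fun a ha => Finset.mem_union_right _ (Multiset.mem_toFinset.2 ha)

theorem add_rootMultiplicity_le_card_roots (hab : a ≠ b) :
    P.rootMultiplicity a + P.rootMultiplicity b ≤ Multiset.card P.roots := by
  simpa [Finset.sum_pair hab] using sum_rootMultiplicity_le_card_roots P {a, b}

theorem add_add_rootMultiplicity_le_card_roots (hab : a ≠ b) (hac : a ≠ c) (hbc : b ≠ c) :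
    P.rootMultiplicity a + P.rootMultiplicity b + P.rootMultiplicity c ≤
      Multiset.card P.roots := by
  simpa [Finset.sum_insert, Finset.sum_pair hbc, hab, hac, add_assoc]
    using sum_rootMultiplicity_le_card_roots P {a, b, c}

end Multiplicity

section Quartic

variable (s t : ℝ)

noncomputable def quartic : ℝ[X] := (X - C 1) * (X - C s) * (X - C t) * (X + C 1)

noncomputable def quintic : ℝ[X] :=
  C (1 / 5) * X ^ 5 - C ((s + t) / 4) * X ^ 4 + C ((s * t - 1) / 3) * X ^ 3
    + C ((s + t) / 2) * X ^ 2 - C (s * t) * X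

theorem quartic_comm : quartic s t = quartic t s := by
  unfold quartic; ring

theorem derivative_quintic : derivative (quintic s t) = quartic s t := by
  refine Polynomial.funext fun x => ?_
  simp only [quintic, quartic, map_mul, derivative_sub, derivative_add, derivative_mul,
    derivative_C, derivative_X_pow, derivative_X, eval_sub, eval_add, eval_mul, eval_C, eval_one,
    eval_pow, eval_X, eval_zero]
  ring

theorem eval_quartic (x : ℝ) : (quartic s t).eval x = (x ^ 2 - 1) * ((x - s) * (x - t)) := by
  simp only [quartic, eval_mul, eval_sub, eval_add, eval_X, eval_C]; ring

theorem eval_derivative_quartic_neg_one :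
    (derivative (quartic s t)).eval (-1) = -2 * ((1 + s) * (1 + t)) := by
  simp only [quartic, derivative_mul, derivative_sub, derivative_add, derivative_X, derivative_C,
    eval_mul, eval_add, eval_sub, eval_X, eval_C, eval_one, eval_zero]; ring

theorem eval_derivative_quartic_one :
    (derivative (quartic s t)).eval 1 = 2 * ((1 - s) * (1 - t)) := by
  simp only [quartic, derivative_mul, derivative_sub, derivative_add, derivative_X, derivative_C,
    eval_mul, eval_add, eval_sub, eval_X, eval_C, eval_one, eval_zero]; ring

theorem quartic_ne_zero : quartic s t ≠ 0 :=
  ((((monic_X_sub_C 1).mul (monic_X_sub_C s)).mul (monic_X_sub_C t)).mul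
    (monic_X_add_C 1)).ne_zero

variable {s t} {x : ℝ}

theorem eval_quartic_nonneg (hx : x ∈ Icc (-1 : ℝ) 1) (h : (x - s) * (x - t) ≤ 0) :
    0 ≤ (quartic s t).eval x := by
  rw [eval_quartic]
  exact mul_nonneg_of_nonpos_of_nonpos (by nlinarith [hx.1, hx.2]) h

theorem eval_quartic_nonpos (hx : x ∈ Icc (-1 : ℝ) 1) (h : 0 ≤ (x - s) * (x - t)) :
    (quartic s t).eval x ≤ 0 := by
  rw [eval_quartic]
  exact mul_nonpos_of_nonpos_of_nonneg (by nlinarith [hx.1, hx.2]) h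

end Quartic

section Antiderivative

variable {s t : ℝ} {P : ℝ[X]}

theorem eq_quintic_add_C (hP : derivative P = quartic s t) :
    P = quintic s t + C ((P - quintic s t).coeff 0) := by
  have : derivative (P - quintic s t) = 0 := by
    rw [derivative_sub, hP, derivative_quintic, sub_self]
  rw [← eq_C_of_derivative_eq_zero this]; ring

theorem natDegree_eq_five (hP : derivative P = quartic s t) : P.natDegree = 5 := by
  rw [eq_quintic_add_C hP, quintic]; compute_degree!

theorem leadingCoeff_eq_one_fifth (hP : derivative P = quartic s t) :
    P.leadingCoeff = 1 / 5 := by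
  rw [leadingCoeff, natDegree_eq_five hP, eq_quintic_add_C hP, quintic]
  simp [coeff_X_pow]

theorem eval_one_sub_eval_neg_one (hP : derivative P = quartic s t) :
    P.eval 1 - P.eval (-1) = -(4 / 15) - 4 / 3 * (s * t) := by
  rw [eq_quintic_add_C hP]
  simp only [quintic, eval_add, eval_sub, eval_mul, eval_C, eval_pow, eval_X]; ring

theorem eval_neg_one_nonneg_of_hyperbolic (hs : -1 ≤ s) (ht : -1 ≤ t)
    (hP : derivative P = quartic s t) (hyp : Hyperbolic P) : 0 ≤ P.eval (-1) := by
  by_contra! hneg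
  have := eval_mul_eval_derivative_derivative_neg (card_roots_eq_natDegree_of_hyperbolic hyp)
    (by rw [natDegree_eq_five hP]; norm_num) (by rw [hP, eval_quartic]; ring) hneg.ne
  rw [hP, eval_derivative_quartic_neg_one] at this
  nlinarith [mul_nonneg (neg_le_iff_add_nonneg'.1 hs) (neg_le_iff_add_nonneg'.1 ht)]

theorem eval_one_nonpos_of_hyperbolic (hs : s ≤ 1) (ht : t ≤ 1)
    (hP : derivative P = quartic s t) (hyp : Hyperbolic P) : P.eval 1 ≤ 0 := by
  by_contra! hpos
  have := eval_mul_eval_derivative_derivative_neg (card_roots_eq_natDegree_of_hyperbolic hyp)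
    (by rw [natDegree_eq_five hP]; norm_num) (by rw [hP, eval_quartic]; ring) hpos.ne'
  rw [hP, eval_derivative_quartic_one] at this
  nlinarith [mul_nonneg (sub_nonneg.2 hs) (sub_nonneg.2 ht)]

theorem neg_one_fifth_le_of_hyperbolic (hs : s ∈ Icc (-1 : ℝ) 1) (ht : t ∈ Icc (-1 : ℝ) 1)
    (hP : derivative P = quartic s t) (hyp : Hyperbolic P) : -(1 / 5) ≤ s * t := by
  have := eval_one_sub_eval_neg_one hP
  have := eval_neg_one_nonneg_of_hyperbolic hs.1 ht.1 hP hyp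
  have := eval_one_nonpos_of_hyperbolic hs.2 ht.2 hP hyp
  linarith

theorem exists_isRoot_ge_one (hP : derivative P = quartic s t) (h1 : P.eval 1 ≤ 0) :
    ∃ r, 1 ≤ r ∧ P.IsRoot r :=
  exists_isRoot_ge (natDegree_pos_iff_degree_pos.1 (by rw [natDegree_eq_five hP]; norm_num))
    (by rw [leadingCoeff_eq_one_fifth hP]; norm_num) h1

theorem succ_le_rootMultiplicity_of_mul_eq_quartic (hP : derivative P = quartic s t) {a : ℝ}
    (ha : P.IsRoot a) {k : ℕ} (Q : ℝ[X]) (hQ : (X - C a) ^ k * Q = quartic s t) :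
    k + 1 ≤ P.rootMultiplicity a :=
  succ_le_rootMultiplicity_of_dvd_derivative (hP ▸ quartic_ne_zero s t) ha (hP ▸ Dvd.intro Q hQ)

theorem one_le_rootMultiplicity (hP : derivative P = quartic s t) {a : ℝ} (ha : P.IsRoot a) :
    1 ≤ P.rootMultiplicity a :=
  succ_le_rootMultiplicity_of_mul_eq_quartic hP ha (k := 0) (quartic s t) (by ring)

theorem four_le_card_roots_of_isRoot_inner_max (hs : -1 ≤ s) (hst : s ≤ t) (ht : t ≤ 1)
    (hP : derivative P = quartic s t) (hPt : P.IsRoot t) (hPm1 : 0 ≤ P.eval (-1))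
    (hPs : P.eval s ≤ 0) (hP1 : P.eval 1 ≤ 0) : 4 ≤ Multiset.card P.roots := by
  have left_root : ∃ r ∈ Icc (-1) s, P.IsRoot r :=
    exists_isRoot_mem_Icc hs (mem_uIcc.2 (.inr ⟨hPs, hPm1⟩))
  rcases ht.lt_or_eq with ht1 | rfl
  · obtain ⟨r₁, hr₁, hr₁P⟩ := exists_isRoot_ge_one hP hP1
    have := one_le_rootMultiplicity hP hr₁P
    rcases hst.lt_or_eq with hst | rfl
    · obtain ⟨r₀, hr₀, hr₀P⟩ := left_root
      have := one_le_rootMultiplicity hP hr₀P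
      have := succ_le_rootMultiplicity_of_mul_eq_quartic hP hPt (k := 1)
        ((X - C 1) * (X - C s) * (X + C 1)) (by unfold quartic; ring)
      have := add_add_rootMultiplicity_le_card_roots (P := P) (a := r₀) (b := t) (c := r₁)
        (by linarith [hr₀.2]) (by linarith [hr₀.2]) (by linarith)
      omega
    · have := succ_le_rootMultiplicity_of_mul_eq_quartic hP hPt (k := 2)
        ((X - C 1) * (X + C 1)) (by unfold quartic; ring)
      have := add_rootMultiplicity_le_card_roots (P := P) (a := s) (b := r₁) (by linarith)
      omega
  · rcases hst.lt_or_eq with hst | rfl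
    · obtain ⟨r₀, hr₀, hr₀P⟩ := left_root
      have := one_le_rootMultiplicity hP hr₀P
      have := succ_le_rootMultiplicity_of_mul_eq_quartic hP hPt (k := 2)
        ((X - C s) * (X + C 1)) (by unfold quartic; ring)
      have := add_rootMultiplicity_le_card_roots (P := P) (a := r₀) (b := 1) (by linarith [hr₀.2])
      omega
    · have := succ_le_rootMultiplicity_of_mul_eq_quartic hP hPt (k := 3) (X + C 1)
        (by unfold quartic; ring)
      have := Multiset.count_le_card 1 P.roots
      rw [count_roots] at this
      omega

theorem four_le_card_roots_of_isRoot_neg_one (hs : -1 ≤ s) (hst : s ≤ t) (ht : t ≤ 1)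
    (hP : derivative P = quartic s t) (hPm1 : P.IsRoot (-1)) (hPs : P.eval s ≤ 0)
    (hPt : 0 ≤ P.eval t) (hP1 : P.eval 1 ≤ 0) : 4 ≤ Multiset.card P.roots := by
  rcases hs.eq_or_lt with rfl | hs
  · obtain ⟨r₁, hr₁, hr₁P⟩ := exists_isRoot_ge_one hP hP1
    have := one_le_rootMultiplicity hP hr₁P
    have := succ_le_rootMultiplicity_of_mul_eq_quartic hP hPm1 (k := 2)
      ((X - C 1) * (X - C t)) (by simp only [quartic, map_neg, sub_neg_eq_add]; ring)
    have := add_rootMultiplicity_le_card_roots (P := P) (a := -1) (b := r₁) (by linarith)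
    omega
  have := succ_le_rootMultiplicity_of_mul_eq_quartic hP hPm1 (k := 1)
    ((X - C 1) * (X - C s) * (X - C t)) (by simp only [quartic, map_neg, sub_neg_eq_add]; ring)
  rcases ht.lt_or_eq with ht | rfl
  · obtain ⟨r₀, hr₀, hr₀P⟩ := exists_isRoot_mem_Icc hst (mem_uIcc.2 (.inl ⟨hPs, hPt⟩))
    obtain ⟨r₁, hr₁, hr₁P⟩ := exists_isRoot_ge_one hP hP1
    have := one_le_rootMultiplicity hP hr₀P
    have := one_le_rootMultiplicity hP hr₁P
    have := add_add_rootMultiplicity_le_card_roots (P := P) (a := -1) (b := r₀) (c := r₁)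
      (by linarith [hr₀.1]) (by linarith) (by linarith [hr₀.2])
    omega
  · have hP1 : P.IsRoot 1 := le_antisymm hP1 hPt
    have := succ_le_rootMultiplicity_of_mul_eq_quartic hP hP1 (k := 1)
      ((X - C s) * (X - C 1) * (X + C 1)) (by unfold quartic; ring)
    have := add_rootMultiplicity_le_card_roots (P := P) (a := -1) (b := 1) (by norm_num)
    omega

theorem exists_hyperbolic_of_neg_one_fifth_le (hs : -1 ≤ s) (hst : s ≤ t) (ht : t ≤ 1)
    (h : -(1 / 5) ≤ s * t) : ∃ P : ℝ[X], derivative P = quartic s t ∧ Hyperbolic P := by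
  set F := quintic s t
  have hF : derivative F = quartic s t := derivative_quintic s t
  have hFs : F.eval s ≤ F.eval (-1) := eval_le_eval_of_derivative_nonpos hs fun x hx =>
    hF ▸ eval_quartic_nonpos ⟨hx.1, hx.2.trans (hst.trans ht)⟩ (by nlinarith [hx.2])
  have hFst : F.eval s ≤ F.eval t := eval_le_eval_of_derivative_nonneg hst fun x hx =>
    hF ▸ eval_quartic_nonneg ⟨hs.trans hx.1, hx.2.trans ht⟩ (by nlinarith [hx.1, hx.2])
  have hF1 : F.eval 1 ≤ F.eval t := eval_le_eval_of_derivative_nonpos ht fun x hx =>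
    hF ▸ eval_quartic_nonpos ⟨hs.trans (hst.trans hx.1), hx.2⟩ (by nlinarith [hx.1])
  have hF1m1 : F.eval 1 ≤ F.eval (-1) := by linarith [eval_one_sub_eval_neg_one hF]
  set m := min (F.eval (-1)) (F.eval t)
  set P := F - C m
  have hP : derivative P = quartic s t := by rw [derivative_sub, derivative_C, sub_zero, hF]
  have hPx (x : ℝ) : P.eval x = F.eval x - m := by simp [P]
  have hm : m ≤ F.eval (-1) ∧ m ≤ F.eval t := ⟨min_le_left _ _, min_le_right _ _⟩
  refine ⟨P, hP, hyperbolic_of_card_roots_eq_natDegree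
    (card_roots_eq_natDegree_of_natDegree_le_card_roots_add_one ?_)⟩
  suffices 4 ≤ Multiset.card P.roots by rw [natDegree_eq_five hP]; omega
  rcases min_choice (F.eval (-1)) (F.eval t) with hm' | hm'
  · exact four_le_card_roots_of_isRoot_neg_one hs hst ht hP (by simp [IsRoot, hPx, m, hm'])
      (by rw [hPx]; linarith) (by rw [hPx]; linarith) (by rw [hPx]; linarith)
  · exact four_le_card_roots_of_isRoot_inner_max hs hst ht hP (by simp [IsRoot, hPx, m, hm'])
      (by rw [hPx]; linarith) (by rw [hPx]; linarith) (by rw [hPx]; linarith)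

end Antiderivative

theorem stmt_5 (s t : ℝ) (hs : s ∈ Set.Icc (-1 : ℝ) 1) (ht : t ∈ Set.Icc (-1 : ℝ) 1)
    (p : Polynomial ℝ)
    (hp : p = (X - C 1) * (X - C s) * (X - C t) * (X + C 1)) :
    (∃ P : Polynomial ℝ, derivative P = p ∧ Hyperbolic P) ↔ s * t ≥ -(1 / 5) := by
  rw [← quartic] at hp
  subst hp
  constructor
  · rintro ⟨P, hP, hyp⟩
    exact neg_one_fifth_le_of_hyperbolic hs ht hP hyp
  · intro h
    rcases le_total s t with hst | hts
    · exact exists_hyperbolic_of_neg_one_fifth_le hs.1 hst ht.2 h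
    · rw [quartic_comm]
      exact exists_hyperbolic_of_neg_one_fifth_le ht.1 hts hs.2 (by linarith)
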